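/- arXiv:math/0309416 — 3 statements merged into one kernel-verified Lean document; each statement's English description precedes it below -/
import Mathlib

section
/- Let $g^{ij}$ be a symmetric positive definite $3\times 3$ matrix and $\lambda \ge 0$, $\mu > 0$. Define the isotropic elasticity tensor $A^{ijkl} = \lambda g^{ij}g^{kl} + \mu(g^{ik}g^{jl} + g^{il}g^{jk})$. Then there exists a constant $C > 0$ such that for every symmetric $3\times 3$ matrix $(M_{ij})$, $A^{ijkl} M_{kl} M_{ij} \ge C \sum_{i,j=1}^3 (M_{ij})^2$. -/
/-! Write `g = Bᵀ B` with `B` invertible. The `λ`-part of the form is `λ (tr gM)² ≥ 0`, and for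
symmetric `M` the `μ`-part is `2μ tr(gMgM) = 2μ ‖B M Bᵀ‖²` in the Frobenius norm. Since
`M = B⁻¹ (B M Bᵀ) B⁻ᵀ`, submultiplicativity gives `‖M‖ ≤ ‖B⁻¹‖² ‖B M Bᵀ‖`, so
`C = 2μ / ‖B⁻¹‖⁴` works. -/

open Finset Matrix
open scoped MatrixOrder Matrix.Norms.Frobenius

namespace Matrix

variable {m n : Type*} [Fintype m] [Fintype n]

theorem frobenius_norm_sq_eq_sum_sq (M : Matrix m n ℝ) :
    ‖M‖ ^ 2 = ∑ i, ∑ j, M i j ^ 2 := by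
  rw [frobenius_norm_def, ← Real.rpow_natCast, ← Real.rpow_mul (by positivity)]
  norm_num [Real.norm_eq_abs, sq_abs]

theorem sum_sum_mul_eq_trace_mul_transpose {R : Type*} [CommSemiring R] (X Y : Matrix m n R) :
    ∑ i, ∑ j, X i j * Y i j = trace (X * Yᵀ) := by
  simp [trace, mul_apply]

theorem sum_mul_mul_mul_mul_eq_trace {R : Type*} [CommSemiring R] (g M : Matrix n n R) :
    ∑ i, ∑ j, ∑ k, ∑ l, g i k * g j l * M k l * M i j = trace (g * M * gᵀ * Mᵀ) := by
  rw [← sum_sum_mul_eq_trace_mul_transpose]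
  simp only [mul_apply, transpose_apply, sum_mul]
  refine sum_congr rfl fun i _ => sum_congr rfl fun j _ => ?_
  rw [sum_comm]
  refine sum_congr rfl fun k _ => sum_congr rfl fun l _ => ?_
  ring

theorem sum_mul_mul_mul_mul_transpose_mul_self_eq_norm_sq (B M : Matrix n n ℝ) :
    ∑ i, ∑ j, ∑ k, ∑ l, (Bᵀ * B) i k * (Bᵀ * B) j l * M k l * M i j = ‖B * M * Bᵀ‖ ^ 2 := by
  have hcycle : Bᵀ * B * M * (Bᵀ * B) * Mᵀ = Bᵀ * (B * M * Bᵀ * (B * Mᵀ)) := by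
    simp only [Matrix.mul_assoc]
  rw [sum_mul_mul_mul_mul_eq_trace, transpose_mul, transpose_transpose, hcycle, trace_mul_comm,
    frobenius_norm_sq_eq_sum_sq]
  simp only [sq, sum_sum_mul_eq_trace_mul_transpose, transpose_mul, transpose_transpose,
    Matrix.mul_assoc]

theorem sum_isotropic_mul_mul_eq {R : Type*} [CommRing R] (g M : Matrix n n R) (lam mu : R)
    (hM : M.IsSymm) :
    ∑ i, ∑ j, ∑ k, ∑ l,
        (lam * g i j * g k l + mu * (g i k * g j l + g i l * g j k)) * M k l * M i j =
      lam * (∑ i, ∑ j, g i j * M i j) ^ 2 +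
        2 * mu * ∑ i, ∑ j, ∑ k, ∑ l, g i k * g j l * M k l * M i j := by
  have hswap : ∑ i, ∑ j, ∑ k, ∑ l, g i l * g j k * M k l * M i j =
      ∑ i, ∑ j, ∑ k, ∑ l, g i k * g j l * M k l * M i j := by
    refine sum_congr rfl fun i _ => sum_congr rfl fun j _ => ?_
    rw [sum_comm]
    refine sum_congr rfl fun k _ => sum_congr rfl fun l _ => ?_
    rw [hM.apply l k]
  have hsquare : ∑ i, ∑ j, ∑ k, ∑ l, lam * (g i j * M i j * (g k l * M k l)) =
      lam * (∑ i, ∑ j, g i j * M i j) ^ 2 := by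
    rw [sq]
    simp only [sum_mul]
    simp only [mul_sum]
  calc _ = ∑ i, ∑ j, ∑ k, ∑ l, (lam * (g i j * M i j * (g k l * M k l)) +
        mu * (g i k * g j l * M k l * M i j) + mu * (g i l * g j k * M k l * M i j)) := by
        congr! 4 with i j k l
        ring
    _ = ∑ i, ∑ j, ∑ k, ∑ l, lam * (g i j * M i j * (g k l * M k l)) +
        mu * ∑ i, ∑ j, ∑ k, ∑ l, g i k * g j l * M k l * M i j +
        mu * ∑ i, ∑ j, ∑ k, ∑ l, g i l * g j k * M k l * M i j := by
      simp only [sum_add_distrib, mul_sum]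
    _ = _ := by rw [hsquare, hswap]; ring

theorem exists_eq_transpose_mul_self_of_posSemidef {g : Matrix n n ℝ} (hg : g.PosSemidef) :
    ∃ B : Matrix n n ℝ, g = Bᵀ * B := by
  classical
  simpa [star_eq_conjTranspose, conjTranspose_eq_transpose_of_trivial] using
    CStarAlgebra.nonneg_iff_eq_star_mul_self.mp hg.nonneg

theorem isUnit_of_isUnit_transpose_mul_self [DecidableEq n] {B : Matrix n n ℝ}
    (h : IsUnit (Bᵀ * B)) : IsUnit B := by
  rw [isUnit_iff_isUnit_det, det_mul] at h
  exact (isUnit_iff_isUnit_det B).mpr (isUnit_of_mul_isUnit_right h)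

theorem norm_le_norm_inv_sq_mul_norm_mul_mul_transpose [DecidableEq n] {B : Matrix n n ℝ}
    (hB : IsUnit B) (M : Matrix n n ℝ) : ‖M‖ ≤ ‖B⁻¹‖ ^ 2 * ‖B * M * Bᵀ‖ := by
  have hM : M = B⁻¹ * (B * M * Bᵀ) * B⁻¹ᵀ := by
    have hdet : IsUnit B.det := (isUnit_iff_isUnit_det B).mp hB
    rw [transpose_nonsing_inv, Matrix.mul_assoc, Matrix.mul_assoc,
      mul_nonsing_inv _ (by rwa [det_transpose]), Matrix.mul_one, ← Matrix.mul_assoc,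
      nonsing_inv_mul _ hdet, Matrix.one_mul]
  calc ‖M‖ = ‖B⁻¹ * (B * M * Bᵀ) * B⁻¹ᵀ‖ := by rw [← hM]
    _ ≤ ‖B⁻¹‖ * ‖B * M * Bᵀ‖ * ‖B⁻¹ᵀ‖ := by
      refine (frobenius_norm_mul _ _).trans ?_
      gcongr
      exact frobenius_norm_mul _ _
    _ = ‖B⁻¹‖ ^ 2 * ‖B * M * Bᵀ‖ := by rw [frobenius_norm_transpose]; ring

end Matrix

theorem elasticity_tensor_coercive_general
    (g : Matrix (Fin 3) (Fin 3) ℝ) (hgpos : g.PosDef)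
    (lam mu : ℝ) (hlam : 0 ≤ lam) (hmu : 0 < mu)
    (A : Fin 3 → Fin 3 → Fin 3 → Fin 3 → ℝ)
    (hA : ∀ i j k l, A i j k l =
      lam * g i j * g k l + mu * (g i k * g j l + g i l * g j k)) :
    ∃ C > 0, ∀ M : Matrix (Fin 3) (Fin 3) ℝ, M.IsSymm →
      ∑ i, ∑ j, ∑ k, ∑ l, A i j k l * M k l * M i j ≥
        C * ∑ i, ∑ j, (M i j) ^ 2 := by
  obtain ⟨B, rfl⟩ := exists_eq_transpose_mul_self_of_posSemidef hgpos.posSemidef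
  have hB : IsUnit B := isUnit_of_isUnit_transpose_mul_self hgpos.isUnit
  have hBinv : 0 < ‖B⁻¹‖ := norm_pos_iff.mpr (isUnit_nonsing_inv_iff.mpr hB).ne_zero
  refine ⟨2 * mu / ‖B⁻¹‖ ^ 4, by positivity, fun M hM => ?_⟩
  simp only [hA]
  rw [sum_isotropic_mul_mul_eq _ _ _ _ hM, sum_mul_mul_mul_mul_transpose_mul_self_eq_norm_sq,
    ← frobenius_norm_sq_eq_sum_sq, ge_iff_le]
  calc 2 * mu / ‖B⁻¹‖ ^ 4 * ‖M‖ ^ 2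
      ≤ 2 * mu / ‖B⁻¹‖ ^ 4 * (‖B⁻¹‖ ^ 2 * ‖B * M * Bᵀ‖) ^ 2 := by
        gcongr
        exact norm_le_norm_inv_sq_mul_norm_mul_mul_transpose hB M
    _ = 2 * mu * ‖B * M * Bᵀ‖ ^ 2 := by field_simp
    _ ≤ lam * (∑ i, ∑ j, (Bᵀ * B) i j * M i j) ^ 2 + 2 * mu * ‖B * M * Bᵀ‖ ^ 2 :=
        le_add_of_nonneg_left (by positivity)

/-- Coercivity of the isotropic elasticity tensor built from a symmetric
positive definite metric tensor `g`. -/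
theorem elasticity_tensor_coercive
    (g : Matrix (Fin 3) (Fin 3) ℝ) (hgpos : g.PosDef) (hgsym : g.IsSymm)
    (lam mu : ℝ) (hlam : 0 ≤ lam) (hmu : 0 < mu)
    (A : Fin 3 → Fin 3 → Fin 3 → Fin 3 → ℝ)
    (hA : ∀ i j k l, A i j k l =
      lam * g i j * g k l + mu * (g i k * g j l + g i l * g j k)) :
    ∃ C > 0, ∀ M : Matrix (Fin 3) (Fin 3) ℝ, M.IsSymm →
      ∑ i, ∑ j, ∑ k, ∑ l, A i j k l * M k l * M i j ≥
        C * ∑ i, ∑ j, (M i j) ^ 2 :=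
  elasticity_tensor_coercive_general g hgpos lam mu hlam hmu A hA
end

section
/- Let $V$ and $\Psi$ be real Hilbert spaces, $a : V \times V \to \mathbb{R}$ a bounded symmetric coercive bilinear form, $c : \Psi \times \Psi \to \mathbb{R}$ a bounded symmetric coercive bilinear form, and $p : \Psi \times V \to \mathbb{R}$ a bounded bilinear form. For each $u \in V$ let $T(u) \in \Psi$ be the unique element satisfying $c(T(u), \psi) = p(\psi, u)$ for all $\psi \in \Psi$ (which exists by Lax–Milgram). Define $B(u,v) = a(u,v) + p(T(u), v)$. Then $B$ is symmetric: $B(u,v) = B(v,u)$ for all $u, v \in V$, and coercive: $B(u,u) \ge a(u,u) \ge \alpha\|u\|_V^2$ where $\alpha$ is the coercivity constant of $a$. -/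
/-- Abstract piezoelectric structure: with `T` defined by `c(T u, ψ) = p(ψ, u)`,
the bilinear form `B(u,v) = a(u,v) + p(T u, v)` is symmetric and coercive. -/
theorem piezo_form_symmetric_coercive
    {V Ψ : Type*} [NormedAddCommGroup V] [InnerProductSpace ℝ V] [CompleteSpace V]
    [NormedAddCommGroup Ψ] [InnerProductSpace ℝ Ψ] [CompleteSpace Ψ]
    (a : V →ₗ[ℝ] V →ₗ[ℝ] ℝ) (c : Ψ →ₗ[ℝ] Ψ →ₗ[ℝ] ℝ) (p : Ψ →ₗ[ℝ] V →ₗ[ℝ] ℝ)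
    (Ca : ℝ) (haB : ∀ u v : V, |a u v| ≤ Ca * ‖u‖ * ‖v‖)
    (Cc : ℝ) (hcB : ∀ φ ψ : Ψ, |c φ ψ| ≤ Cc * ‖φ‖ * ‖ψ‖)
    (Cp : ℝ) (hpB : ∀ (ψ : Ψ) (v : V), |p ψ v| ≤ Cp * ‖ψ‖ * ‖v‖)
    (hasymm : ∀ u v : V, a u v = a v u)
    (α : ℝ) (hα : 0 < α) (hacoer : ∀ u : V, a u u ≥ α * ‖u‖ ^ 2)
    (hcsymm : ∀ φ ψ : Ψ, c φ ψ = c ψ φ)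
    (γ : ℝ) (hγ : 0 < γ) (hccoer : ∀ ψ : Ψ, c ψ ψ ≥ γ * ‖ψ‖ ^ 2)
    (T : V → Ψ) (hT : ∀ (u : V) (ψ : Ψ), c (T u) ψ = p ψ u)
    (B : V → V → ℝ) (hB : ∀ u v : V, B u v = a u v + p (T u) v) :
    (∀ u v : V, B u v = B v u) ∧
      ∀ u : V, B u u ≥ a u u ∧ a u u ≥ α * ‖u‖ ^ 2 := by
  have key : ∀ u v : V, B u v = a u v + c (T v) (T u) := by
    intro u v
    rw [hB, hT v (T u)]
  constructor
  · intro u v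
    rw [key u v, key v u, hasymm u v, hcsymm (T v) (T u)]
  · intro u
    refine ⟨?_, hacoer u⟩
    have h1 : c (T u) (T u) ≥ 0 :=
      le_trans (by positivity) (hccoer (T u))
    rw [key u u]
    linarith
end

section
/- Let $\Omega = \omega \times (-1,1)$ and let $u \in (H^1(\Omega))^3$ satisfy $e_{i3}(u) = 0$ for $i = 1,2,3$, where $e_{ij}(u) = \tfrac12(\partial_i u_j + \partial_j u_i)$. Then there exist $\zeta_\alpha \in H^1(\omega)$ ($\alpha = 1,2$) and $\zeta_3 \in H^2(\omega)$ such that $u_\alpha(x_1,x_2,x_3) = \zeta_\alpha(x_1,x_2) - x_3\, \partial_\alpha \zeta_3(x_1,x_2)$ and $u_3(x_1,x_2,x_3) = \zeta_3(x_1,x_2)$. -/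
noncomputable section

/-- Basis directions of `(ℝ × ℝ) × ℝ`. -/
def dir : Fin 3 → (ℝ × ℝ) × ℝ := ![((1, 0), 0), ((0, 1), 0), ((0, 0), 1)]

/-- Partial derivative of a function on `(ℝ × ℝ) × ℝ` in direction `i`. -/
def pd (i : Fin 3) (f : (ℝ × ℝ) × ℝ → ℝ) (x : (ℝ × ℝ) × ℝ) : ℝ :=
  fderiv ℝ f x (dir i)

/-- Horizontal basis directions of `ℝ × ℝ`. -/
def hdir : Fin 2 → ℝ × ℝ := ![(1, 0), (0, 1)]

/-- Partial derivative of a function on `ℝ × ℝ`. -/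
def pd2 (α : Fin 2) (f : ℝ × ℝ → ℝ) (y : ℝ × ℝ) : ℝ :=
  fderiv ℝ f y (hdir α)

/-- Linearized strain tensor `e_{ij}(u) = ½(∂ᵢu_j + ∂_j uᵢ)`. -/
def strain (u : Fin 3 → (ℝ × ℝ) × ℝ → ℝ) (i j : Fin 3)
    (x : (ℝ × ℝ) × ℝ) : ℝ :=
  (pd i (u j) x + pd j (u i) x) / 2

/-!
Since `e₃₃(u) = ∂₃u₃`, the transverse displacement `u₃` does not depend on `x₃`, so it equals its
trace `ζ₃` on the mid-surface. Then `e_{α3}(u) = 0` reads `∂₃u_α = -∂_αu₃ = -∂_αζ₃`, a vertical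
derivative independent of `x₃`, so `u_α` is affine in `x₃` with slope `-∂_αζ₃`. The regularity of
`∂_αζ₃` comes for free: it is a difference quotient of `u_α` between two heights.
-/

open Set Filter

theorem Convex.eq_add_mul_of_hasDerivWithinAt {g : ℝ → ℝ} {s : Set ℝ} (hs : Convex ℝ s) {c : ℝ}
    (hg : ∀ x ∈ s, HasDerivWithinAt g c s x) {a x : ℝ} (ha : a ∈ s) (hx : x ∈ s) :
    g x = g a + (x - a) * c := by
  have hzero : ∀ y ∈ s, HasDerivWithinAt (fun y => g y - y * c) 0 s y := fun y hy => by
    have h : HasDerivWithinAt (fun y => g y - y * c) (c - 1 * c) s y :=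
      (hg y hy).sub ((hasDerivWithinAt_id y s).mul_const c)
    rwa [one_mul, sub_self] at h
  have h := hs.norm_image_sub_le_of_norm_hasDerivWithin_le hzero (fun _ _ => norm_zero.le) ha hx
  rw [zero_mul, norm_le_zero_iff] at h
  linarith

section

variable {ω : Set (ℝ × ℝ)} {I : Set ℝ} {f : (ℝ × ℝ) × ℝ → ℝ} {y : ℝ × ℝ} {t : ℝ}

theorem hasDerivAt_vertical_slice (hf : DifferentiableAt ℝ f (y, t)) :
    HasDerivAt (fun s => f (y, s)) (pd 2 f (y, t)) t :=
  hf.hasFDerivAt.comp_hasDerivAt t ((hasDerivAt_const t y).prodMk (hasDerivAt_id t))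

theorem pd2_horizontal_slice (hf : DifferentiableAt ℝ f (y, t)) (α : Fin 2) :
    pd2 α (fun y => f (y, t)) y = pd α.castSucc f (y, t) := by
  have hslice : HasFDerivAt (fun y => f (y, t))
      ((fderiv ℝ f (y, t)).comp (ContinuousLinearMap.inl ℝ (ℝ × ℝ) ℝ)) y :=
    hf.hasFDerivAt.comp y (hasFDerivAt_prodMk_left y t)
  rw [pd2, hslice.fderiv]
  fin_cases α <;> rfl

theorem pd_castSucc_eq_pd2_of_eqOn (hω : IsOpen ω) {g : ℝ × ℝ → ℝ}
    (hfg : ∀ y ∈ ω, f (y, t) = g y) (hf : DifferentiableAt ℝ f (y, t)) (hy : y ∈ ω)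
    (α : Fin 2) : pd α.castSucc f (y, t) = pd2 α g y := by
  rw [← pd2_horizontal_slice hf, pd2, pd2,
    (eventuallyEq_of_mem (hω.mem_nhds hy) hfg).fderiv_eq]

theorem eq_add_mul_of_pd_vertical_eq (hI : Convex ℝ I) (hI0 : 0 ∈ I) (hf : Differentiable ℝ f)
    {c : ℝ × ℝ → ℝ} (hc : ∀ x ∈ ω ×ˢ I, pd 2 f x = c x.1) :
    ∀ x ∈ ω ×ˢ I, f x = f (x.1, 0) + x.2 * c x.1 := by
  rintro ⟨y, t⟩ ⟨hy, ht⟩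
  have hslice : ∀ s ∈ I, HasDerivWithinAt (fun s => f (y, s)) (c y) I s := fun s hs =>
    hc (y, s) ⟨hy, hs⟩ ▸ (hasDerivAt_vertical_slice (hf _)).hasDerivWithinAt
  simpa using hI.eq_add_mul_of_hasDerivWithinAt hslice hI0 ht

theorem differentiableOn_of_eq_sub_mul (hf : Differentiable ℝ f) {p : ℝ × ℝ → ℝ} (ht : t ∈ I)
    (ht0 : t ≠ 0) (hfp : ∀ x ∈ ω ×ˢ I, f x = f (x.1, 0) - x.2 * p x.1) :
    DifferentiableOn ℝ p ω := by
  have hquot : DifferentiableOn ℝ (fun y => (f (y, 0) - f (y, t)) / t) ω := by fun_prop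
  refine hquot.congr fun y hy => ?_
  rw [hfp (y, t) ⟨hy, ht⟩]
  field_simp
  ring

variable {u : Fin 3 → (ℝ × ℝ) × ℝ → ℝ}

theorem eq_of_strain_two_two_eq_zero (hI : Convex ℝ I) (hI0 : 0 ∈ I)
    (hu : Differentiable ℝ (u 2)) (hstrain : ∀ x ∈ ω ×ˢ I, strain u 2 2 x = 0) :
    ∀ x ∈ ω ×ˢ I, u 2 x = u 2 (x.1, 0) := by
  have hvert : ∀ x ∈ ω ×ˢ I, pd 2 (u 2) x = 0 := fun x hx => by
    simpa [strain] using hstrain x hx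
  simpa using eq_add_mul_of_pd_vertical_eq (c := 0) hI hI0 hu hvert

theorem eq_sub_mul_pd2_of_strain_two_eq_zero (hω : IsOpen ω) (hI : Convex ℝ I) (hI0 : 0 ∈ I)
    (hu : ∀ i, Differentiable ℝ (u i)) (hstrain : ∀ i, ∀ x ∈ ω ×ˢ I, strain u i 2 x = 0)
    (α : Fin 2) :
    ∀ x ∈ ω ×ˢ I,
      u α.castSucc x = u α.castSucc (x.1, 0) - x.2 * pd2 α (fun y => u 2 (y, 0)) x.1 := by
  set ζ₃ : ℝ × ℝ → ℝ := fun y => u 2 (y, 0)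
  have hu₂ := eq_of_strain_two_two_eq_zero hI hI0 (hu 2) (hstrain 2)
  have hvert : ∀ x ∈ ω ×ˢ I, pd 2 (u α.castSucc) x = -pd2 α ζ₃ x.1 := by
    rintro ⟨y, t⟩ ⟨hy, ht⟩
    have hhor : pd α.castSucc (u 2) (y, t) = pd2 α ζ₃ y :=
      pd_castSucc_eq_pd2_of_eqOn hω (fun y' hy' => hu₂ (y', t) ⟨hy', ht⟩) (hu 2 _) hy α
    have h := hstrain α.castSucc (y, t) ⟨hy, ht⟩
    rw [strain, hhor] at h
    linarith
  intro x hx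
  rw [eq_add_mul_of_pd_vertical_eq (c := fun y => -pd2 α ζ₃ y) hI hI0 (hu _) hvert x hx]
  ring

end

theorem kirchhoff_love_characterization_general
    (ω : Set (ℝ × ℝ)) (hω : IsOpen ω)
    (u : Fin 3 → (ℝ × ℝ) × ℝ → ℝ) (hu : ∀ i, ContDiff ℝ 1 (u i))
    (hstrain : ∀ (i : Fin 3) (x : (ℝ × ℝ) × ℝ),
      x ∈ ω ×ˢ Set.Ioo (-1 : ℝ) 1 → strain u i 2 x = 0) :
    ∃ (ζ₁ ζ₂ ζ₃ : ℝ × ℝ → ℝ),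
      DifferentiableOn ℝ ζ₁ ω ∧ DifferentiableOn ℝ ζ₂ ω ∧
      DifferentiableOn ℝ ζ₃ ω ∧
      (∀ α : Fin 2, DifferentiableOn ℝ (pd2 α ζ₃) ω) ∧
      (∀ x ∈ ω ×ˢ Set.Ioo (-1 : ℝ) 1,
        u 0 x = ζ₁ x.1 - x.2 * pd2 0 ζ₃ x.1 ∧
        u 1 x = ζ₂ x.1 - x.2 * pd2 1 ζ₃ x.1 ∧
        u 2 x = ζ₃ x.1) := by
  have hud : ∀ i, Differentiable ℝ (u i) := fun i => (hu i).differentiable one_ne_zero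
  have hI : Convex ℝ (Ioo (-1 : ℝ) 1) := convex_Ioo _ _
  have hI0 : (0 : ℝ) ∈ Ioo (-1 : ℝ) 1 := by norm_num
  have hbend := eq_sub_mul_pd2_of_strain_two_eq_zero hω hI hI0 hud hstrain
  refine ⟨fun y => u 0 (y, 0), fun y => u 1 (y, 0), fun y => u 2 (y, 0),
    by fun_prop, by fun_prop, by fun_prop, fun α => ?_, fun x hx => ?_⟩
  · exact differentiableOn_of_eq_sub_mul (hud _) (t := 1 / 2) (by norm_num) (by norm_num) (hbend α)
  · exact ⟨hbend 0 x hx, hbend 1 x hx, eq_of_strain_two_two_eq_zero hI hI0 (hud 2) (hstrain 2) x hx⟩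

/-- Kirchhoff–Love characterization: a displacement field on
`Ω = ω × (-1,1)` with vanishing transverse strains `e_{i3}(u) = 0` is of
bending type: `u_α = ζ_α - x₃ ∂_α ζ₃`, `u₃ = ζ₃`. -/
theorem kirchhoff_love_characterization
    (ω : Set (ℝ × ℝ)) (hω : IsOpen ω) (hconn : IsConnected ω)
    (hωb : Bornology.IsBounded ω)
    (u : Fin 3 → (ℝ × ℝ) × ℝ → ℝ) (hu : ∀ i, ContDiff ℝ 1 (u i))
    (hstrain : ∀ (i : Fin 3) (x : (ℝ × ℝ) × ℝ),
      x ∈ ω ×ˢ Set.Ioo (-1 : ℝ) 1 → strain u i 2 x = 0) :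
    ∃ (ζ₁ ζ₂ ζ₃ : ℝ × ℝ → ℝ),
      DifferentiableOn ℝ ζ₁ ω ∧ DifferentiableOn ℝ ζ₂ ω ∧
      DifferentiableOn ℝ ζ₃ ω ∧
      (∀ α : Fin 2, DifferentiableOn ℝ (pd2 α ζ₃) ω) ∧
      (∀ x ∈ ω ×ˢ Set.Ioo (-1 : ℝ) 1,
        u 0 x = ζ₁ x.1 - x.2 * pd2 0 ζ₃ x.1 ∧
        u 1 x = ζ₂ x.1 - x.2 * pd2 1 ζ₃ x.1 ∧
        u 2 x = ζ₃ x.1) :=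
  kirchhoff_love_characterization_general ω hω u hu hstrain

end
end
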